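/- If C : ℝ → Matrix n n ℝ solves the damped periodic Lyapunov equation C' = T(Df(γ) C + C Df(γ)ᵀ + Q F(γ) F(γ)ᵀ Qᵀ + a f(γ) f(γ)ᵀ) and λ solves the adjoint equation λ' = -T Df(γ)ᵀ λ with λᵀ f(γ) ≡ 1 and Q = I - f(γ) λᵀ (so λᵀ Q = 0), then d/dt (λ(t)ᵀ C(t) λ(t)) = a T. Consequently, if C is 1-periodic and λ is 1-periodic, then a = 0. -/

import Mathlib

/-!
Differentiating `λᵀ C λ` along the two equations, the terms `λᵀ D C λ` and `λᵀ C Dᵀ λ` coming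
from `C'` are cancelled by those coming from `λ' = -T Dᵀ λ`; the noise term vanishes because
`λᵀ Q = 0`, and the damping term contributes `a (λᵀ f)² = a`. So `λᵀ C λ` grows linearly with
slope `a T`, which is incompatible with periodicity unless `a = 0`.
-/

open Matrix

attribute [local instance] Matrix.normedAddCommGroup Matrix.normedSpace

section Derivatives

variable {𝕜 : Type*} [NontriviallyNormedField 𝕜] {ι κ : Type*} [Fintype ι] {t : 𝕜}

theorem HasDerivAt.dotProduct {u v : 𝕜 → ι → 𝕜} {u' v' : ι → 𝕜}
    (hu : HasDerivAt u u' t) (hv : HasDerivAt v v' t) :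
    HasDerivAt (fun s => u s ⬝ᵥ v s) (u' ⬝ᵥ v t + u t ⬝ᵥ v') t := by
  show HasDerivAt (fun s => ∑ i, u s i * v s i) (∑ i, u' i * v t i + ∑ i, u t i * v' i) t
  rw [← Finset.sum_add_distrib]
  exact HasDerivAt.fun_sum fun i _ =>
    (hasDerivAt_pi.1 hu i).mul (hasDerivAt_pi.1 hv i)

theorem HasDerivAt.mulVec {A : 𝕜 → Matrix κ ι 𝕜} {v : 𝕜 → ι → 𝕜} {A' : Matrix κ ι 𝕜}
    {v' : ι → 𝕜} (hA : HasDerivAt A A' t) (hv : HasDerivAt v v' t) :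
    HasDerivAt (fun s => A s *ᵥ v s) (A' *ᵥ v t + A t *ᵥ v') t :=
  hasDerivAt_pi.2 fun k => (hasDerivAt_pi.1 hA k).dotProduct hv

end Derivatives

theorem eq_zero_of_hasDerivAt_const_of_apply_eq {g : ℝ → ℝ} {c a b : ℝ}
    (hg : ∀ t, HasDerivAt g c t) (hab : a < b) (hgab : g a = g b) : c = 0 := by
  obtain ⟨_, _, hc⟩ := exists_hasDerivAt_eq_slope g (fun _ => c) hab
    (fun t _ => (hg t).continuousAt.continuousWithinAt) fun t _ => hg t
  rwa [hgab, sub_self, zero_div] at hc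

section Algebra

variable {R : Type*} [CommRing R] {ι κ : Type*} [Fintype ι]

theorem vecMul_one_sub_vecMulVec [DecidableEq ι] {v w : ι → R} (hwv : w ⬝ᵥ v = 1) :
    w ᵥ* (1 - vecMulVec v w) = 0 := by
  rw [vecMul_sub, vecMul_one, vecMul_vecMulVec, hwv, one_smul, sub_self]

theorem dotProduct_mul_mulVec_eq_zero [Fintype κ] {Q : Matrix ι ι R} {w : ι → R}
    (hwQ : w ᵥ* Q = 0) (M : Matrix ι κ R) (x : κ → R) : w ⬝ᵥ ((Q * M) *ᵥ x) = 0 := by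
  rw [dotProduct_mulVec, ← vecMul_vecMul, hwQ, zero_vecMul, zero_dotProduct]

theorem dotProduct_vecMulVec_self_mulVec (v w : ι → R) :
    w ⬝ᵥ (vecMulVec v v *ᵥ w) = (w ⬝ᵥ v) ^ 2 := by
  rw [vecMulVec_mulVec, op_smul_eq_smul, dotProduct_smul, smul_eq_mul, dotProduct_comm v, sq]

theorem dotProduct_mul_mulVec [Fintype κ] (A : Matrix ι ι R) (B : Matrix ι κ R) (w : ι → R)
    (x : κ → R) :
    w ⬝ᵥ ((A * B) *ᵥ x) = (Aᵀ *ᵥ w) ⬝ᵥ (B *ᵥ x) := by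
  rw [← mulVec_mulVec, dotProduct_mulVec, mulVec_transpose]

theorem adjoint_lyapunov_quadratic_form_deriv [Fintype κ] (T a : R) (D C Q : Matrix ι ι R)
    (G : Matrix ι κ R) {v w : ι → R} (hwv : w ⬝ᵥ v = 1) (hwQ : w ᵥ* Q = 0) :
    (-(T • (Dᵀ *ᵥ w))) ⬝ᵥ (C *ᵥ w)
      + w ⬝ᵥ ((T • (D * C + C * Dᵀ + Q * G * Gᵀ * Qᵀ + a • vecMulVec v v)) *ᵥ w
        + C *ᵥ -(T • (Dᵀ *ᵥ w))) = a * T := by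
  have hnoise : w ⬝ᵥ ((Q * G * Gᵀ * Qᵀ) *ᵥ w) = 0 := by
    rw [Matrix.mul_assoc, Matrix.mul_assoc]
    exact dotProduct_mul_mulVec_eq_zero hwQ _ _
  have hdamp : w ⬝ᵥ (vecMulVec v v *ᵥ w) = 1 := by
    rw [dotProduct_vecMulVec_self_mulVec, hwv, one_pow]
  have hDC : w ⬝ᵥ ((D * C) *ᵥ w) = (Dᵀ *ᵥ w) ⬝ᵥ (C *ᵥ w) := dotProduct_mul_mulVec D C w w
  have hCD : w ⬝ᵥ ((C * Dᵀ) *ᵥ w) = w ⬝ᵥ (C *ᵥ (Dᵀ *ᵥ w)) := by rw [mulVec_mulVec]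
  simp only [smul_mulVec, add_mulVec, mulVec_neg, mulVec_smul, dotProduct_add, dotProduct_neg,
    dotProduct_smul, neg_dotProduct, smul_dotProduct, smul_eq_mul, hnoise, hdamp, hDC, hCD]
  ring

end Algebra

theorem damped_lyapunov_conserved_quantity_general {n m : ℕ} (T : ℝ) (hT : 0 < T) (a : ℝ)
    (f : (Fin n → ℝ) → (Fin n → ℝ)) (Df : (Fin n → ℝ) → Matrix (Fin n) (Fin n) ℝ)
    (F : (Fin n → ℝ) → Matrix (Fin n) (Fin m) ℝ)
    (γ : ℝ → Fin n → ℝ)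
    (lam : ℝ → Fin n → ℝ)
    (hlam : ∀ t, HasDerivAt lam (-(T • ((Df (γ t))ᵀ *ᵥ lam t))) t)
    (hnorm : ∀ t, lam t ⬝ᵥ f (γ t) = 1)
    (Q : ℝ → Matrix (Fin n) (Fin n) ℝ)
    (hQ : ∀ t, Q t = 1 - vecMulVec (f (γ t)) (lam t))
    (C : ℝ → Matrix (Fin n) (Fin n) ℝ)
    (hC : ∀ t, HasDerivAt C (T • (Df (γ t) * C t + C t * (Df (γ t))ᵀ +
      Q t * F (γ t) * (F (γ t))ᵀ * (Q t)ᵀ + a • vecMulVec (f (γ t)) (f (γ t)))) t) :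
    (∀ t : ℝ, HasDerivAt (fun s => lam s ⬝ᵥ (C s *ᵥ lam s)) (a * T) t) ∧
    (C 1 = C 0 → lam 1 = lam 0 → a = 0) := by
  have hderiv : ∀ t, HasDerivAt (fun s => lam s ⬝ᵥ (C s *ᵥ lam s)) (a * T) t := fun t => by
    have h := (hlam t).dotProduct ((hC t).mulVec (hlam t))
    have hQ0 : lam t ᵥ* Q t = 0 := hQ t ▸ vecMul_one_sub_vecMulVec (hnorm t)
    rwa [adjoint_lyapunov_quadratic_form_deriv T a _ _ _ _ (hnorm t) hQ0] at h
  refine ⟨hderiv, fun hC1 hlam1 => ?_⟩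
  have haT : a * T = 0 :=
    eq_zero_of_hasDerivAt_const_of_apply_eq hderiv zero_lt_one (by simp only [hC1, hlam1])
  exact (mul_eq_zero.1 haT).resolve_right hT.ne'

/-- if `C` solves the damped periodic Lyapunov equation
`C' = T(Df(γ) C + C Df(γ)ᵀ + Q F(γ) F(γ)ᵀ Qᵀ + a f(γ) f(γ)ᵀ)` with
`Q = I - f(γ) λᵀ`, `λᵀ f(γ) ≡ 1`, `λ` solving the adjoint equation, then
`d/dt (λᵀ C λ) = a T`; consequently if `C` and `λ` are 1-periodic, `a = 0`. -/
theorem damped_lyapunov_conserved_quantity {n m : ℕ} (T : ℝ) (hT : 0 < T) (a : ℝ)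
    (f : (Fin n → ℝ) → (Fin n → ℝ)) (Df : (Fin n → ℝ) → Matrix (Fin n) (Fin n) ℝ)
    (hf : ContDiff ℝ 1 f)
    (hDf : ∀ x, HasFDerivAt f ((Df x).mulVecLin.toContinuousLinearMap) x)
    (F : (Fin n → ℝ) → Matrix (Fin n) (Fin m) ℝ)
    (γ : ℝ → Fin n → ℝ) (hγ : ∀ t, HasDerivAt γ (T • f (γ t)) t)
    (lam : ℝ → Fin n → ℝ)
    (hlam : ∀ t, HasDerivAt lam (-(T • ((Df (γ t))ᵀ *ᵥ lam t))) t)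
    (hnorm : ∀ t, lam t ⬝ᵥ f (γ t) = 1)
    (Q : ℝ → Matrix (Fin n) (Fin n) ℝ)
    (hQ : ∀ t, Q t = 1 - vecMulVec (f (γ t)) (lam t))
    (C : ℝ → Matrix (Fin n) (Fin n) ℝ)
    (hC : ∀ t, HasDerivAt C (T • (Df (γ t) * C t + C t * (Df (γ t))ᵀ +
      Q t * F (γ t) * (F (γ t))ᵀ * (Q t)ᵀ + a • vecMulVec (f (γ t)) (f (γ t)))) t) :
    (∀ t : ℝ, HasDerivAt (fun s => lam s ⬝ᵥ (C s *ᵥ lam s)) (a * T) t) ∧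
    (C 1 = C 0 → lam 1 = lam 0 → a = 0) :=
  damped_lyapunov_conserved_quantity_general T hT a f Df F γ lam hlam hnorm Q hQ C hC
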